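/- Let W = {x ∈ [0,∞) : T^k(x) ∉ ℤ for all k ∈ ℕ}, equipped with the subspace topology from ℝ, and define ι : W → (ℤ⁺)^ℕ by letting ι(x)_k be the unique positive integer i with T^k(x) ∈ (i − 1, i). Equip (ℤ⁺)^ℕ with the product topology, ℤ⁺ being discrete. Then ι is a homeomorphism of W onto its image, and ι(T(x)) = σ(ι(x)) for all x ∈ W, where σ : (ℤ⁺)^ℕ → (ℤ⁺)^ℕ is the left shift (σ(a)_k = a_{k+1}). -/

import Mathlib

open Set Filter

noncomputable section

/-- `ell n = min {k ∈ ℤ⁺ : n ≤ 4^k}`. -/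
def ell (n : ℕ) : ℕ := sInf {k : ℕ | 1 ≤ k ∧ n ≤ 4 ^ k}

/-- The value of the map `T` at the nonnegative integer `n`:
`0` if `n` is even and `4 ^ ℓ(n) + 1` if `n` is odd. -/
def Tval (n : ℕ) : ℝ := if Even n then 0 else 4 ^ ell n + 1

/-- `T : [0,∞) → [0,∞)` is the unique continuous map which is affine on each
integer interval `[n-1, n]` and takes the value `Tval n` at every nonnegative
integer `n`.  This is expressed by linear interpolation on each `[n, n+1]`. -/
def IsT (T : ℝ → ℝ) : Prop :=
  ∀ n : ℕ, ∀ x ∈ Set.Icc (n : ℝ) (n + 1),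
    T x = ((n : ℝ) + 1 - x) * Tval n + (x - (n : ℝ)) * Tval (n + 1)

/-- `(x_k)` is a `δ`-pseudo orbit of `T` in `[0,∞)`. -/
def IsPseudoOrbit (T : ℝ → ℝ) (δ : ℝ) (x : ℕ → ℝ) : Prop :=
  (∀ k, 0 ≤ x k) ∧ ∀ k, |x (k + 1) - T (x k)| < δ

open Topology

/-!
On each interval `[n, n+1]` the map `T` is affine with slope `±(4 ^ ℓ(m) + 1)` for the odd
endpoint `m`, so `T` expands distances by a factor at least `5` on each open unit interval
`(i - 1, i)` and is continuous there. Two points of `W` with the same itinerary up to time `N`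
therefore lie within `5 ^ (-N)` of each other, which gives injectivity of `ι` and continuity of
its inverse; continuity of `ι` holds because every point of `W` has all its iterates in the
interiors of unit intervals. The conjugacy is immediate from `T^[k] (T x) = T^[k+1] x`.
-/

lemma ell_spec (n : ℕ) : 1 ≤ ell n ∧ n ≤ 4 ^ ell n := by
  have hmem : max 1 n ∈ {k : ℕ | 1 ≤ k ∧ n ≤ 4 ^ k} :=
    ⟨le_max_left _ _, (Nat.lt_pow_self (by norm_num : 1 < 4)).le.trans
      (Nat.pow_le_pow_right (by norm_num) (le_max_right _ _))⟩
  exact Nat.sInf_mem ⟨_, hmem⟩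

lemma five_le_Tval_of_odd {m : ℕ} (hm : Odd m) : (5 : ℝ) ≤ Tval m := by
  have h : (4 : ℝ) ^ 1 ≤ 4 ^ ell m := pow_le_pow_right₀ (by norm_num) (ell_spec m).1
  rw [Tval, if_neg (Nat.not_even_iff_odd.mpr hm)]
  linarith

lemma five_le_abs_Tval_succ_sub (n : ℕ) : 5 ≤ |Tval (n + 1) - Tval n| := by
  rcases Nat.even_or_odd n with hn | hn
  · have h5 := five_le_Tval_of_odd hn.add_one
    rw [show Tval n = 0 from if_pos hn, sub_zero, abs_of_nonneg (by linarith)]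
    exact h5
  · have h5 := five_le_Tval_of_odd hn
    rw [show Tval (n + 1) = 0 from if_pos hn.add_one, zero_sub, abs_neg,
      abs_of_nonneg (by linarith)]
    exact h5

lemma Nat.eq_of_mem_Ioo_sub_one {i j : ℕ} {z : ℝ} (hi : z ∈ Ioo ((i : ℝ) - 1) i)
    (hj : z ∈ Ioo ((j : ℝ) - 1) j) : i = j := by
  have h₁ : (i : ℝ) < j + 1 := by linarith [hi.1, hj.2]
  have h₂ : (j : ℝ) < i + 1 := by linarith [hi.2, hj.1]
  norm_cast at h₁ h₂
  omega

namespace IsT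

variable {T : ℝ → ℝ} (hT : IsT T)
include hT

lemma sub_eq {n : ℕ} {x y : ℝ} (hx : x ∈ Icc (n : ℝ) (n + 1)) (hy : y ∈ Icc (n : ℝ) (n + 1)) :
    T x - T y = (x - y) * (Tval (n + 1) - Tval n) := by
  rw [hT n x hx, hT n y hy]
  ring

lemma five_mul_abs_sub_le {i : ℕ} (hi : 1 ≤ i) {a b : ℝ} (ha : a ∈ Ioo ((i : ℝ) - 1) i)
    (hb : b ∈ Ioo ((i : ℝ) - 1) i) : 5 * |a - b| ≤ |T a - T b| := by
  obtain ⟨n, rfl⟩ : ∃ n, i = n + 1 := ⟨i - 1, by omega⟩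
  push_cast at ha hb
  rw [hT.sub_eq ⟨by linarith [ha.1], ha.2.le⟩ ⟨by linarith [hb.1], hb.2.le⟩, abs_mul,
    mul_comm 5]
  exact mul_le_mul_of_nonneg_left (five_le_abs_Tval_succ_sub n) (abs_nonneg _)

lemma continuousAt {i : ℕ} (hi : 1 ≤ i) {z : ℝ} (hz : z ∈ Ioo ((i : ℝ) - 1) i) :
    ContinuousAt T z := by
  obtain ⟨n, rfl⟩ : ∃ n, i = n + 1 := ⟨i - 1, by omega⟩
  push_cast at hz
  have hz' : z ∈ Ioo (n : ℝ) (n + 1) := ⟨by linarith [hz.1], hz.2⟩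
  have hT_eq : (fun w => ((n : ℝ) + 1 - w) * Tval n + (w - n) * Tval (n + 1)) =ᶠ[𝓝 z] T := by
    filter_upwards [isOpen_Ioo.mem_nhds hz'] with w hw
    exact (hT n w (Ioo_subset_Icc_self hw)).symm
  exact ContinuousAt.congr (by fun_prop) hT_eq

end IsT

lemma continuousAt_iterate_of_forall_lt {X : Type*} [TopologicalSpace X] {f : X → X} {x : X}
    {N : ℕ} (hf : ∀ k < N, ContinuousAt f (f^[k] x)) : ContinuousAt f^[N] x := by
  induction N with
  | zero => exact continuousAt_id
  | succ N ih =>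
    rw [Function.iterate_succ']
    exact (hf N N.lt_succ_self).comp (ih fun k hk => hf k (hk.trans N.lt_succ_self))

namespace Itinerary

variable {T : ℝ → ℝ} {W : Set ℝ} {ι : W → ℕ → ℕ}
  (hι : ∀ x : W, ∀ k : ℕ, 1 ≤ ι x k ∧ T^[k] (x : ℝ) ∈ Ioo ((ι x k : ℝ) - 1) (ι x k))
include hι

lemma apply_shift {x y : W} (hxy : (y : ℝ) = T x) (k : ℕ) : ι y k = ι x (k + 1) := by
  have hx := (hι x (k + 1)).2
  rw [Function.iterate_succ_apply, ← hxy] at hx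
  exact Nat.eq_of_mem_Ioo_sub_one (hι y k).2 hx

section Expanding

variable {c : ℝ}
  (hexp : ∀ i : ℕ, 1 ≤ i → ∀ a ∈ Ioo ((i : ℝ) - 1) i, ∀ b ∈ Ioo ((i : ℝ) - 1) i,
    c * |a - b| ≤ |T a - T b|)
include hexp

lemma pow_mul_abs_sub_le (hc : 0 ≤ c) {x y : W} {N : ℕ} (hxy : ∀ k < N, ι x k = ι y k) :
    c ^ N * |(x : ℝ) - y| ≤ |T^[N] (x : ℝ) - T^[N] y| := by
  induction N with
  | zero => simp
  | succ N ih =>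
    have hx := (hι x N).2
    rw [hxy N N.lt_succ_self] at hx
    rw [Function.iterate_succ_apply', Function.iterate_succ_apply', pow_succ', mul_assoc]
    calc c * (c ^ N * |(x : ℝ) - y|)
        ≤ c * |T^[N] (x : ℝ) - T^[N] y| :=
          mul_le_mul_of_nonneg_left (ih fun k hk => hxy k (hk.trans N.lt_succ_self)) hc
      _ ≤ _ := hexp _ (hι y N).1 _ hx _ (hι y N).2

lemma abs_sub_lt_inv_pow (hc : 0 < c) {x y : W} {N : ℕ} (hxy : ∀ k ≤ N, ι x k = ι y k) :
    |(x : ℝ) - y| < c⁻¹ ^ N := by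
  have hx := (hι x N).2
  have hy := (hι y N).2
  rw [hxy N le_rfl] at hx
  have hgap : |T^[N] (x : ℝ) - T^[N] y| < 1 :=
    abs_sub_lt_iff.2 ⟨by linarith [hx.2, hy.1], by linarith [hx.1, hy.2]⟩
  rw [inv_pow, ← one_div, lt_div_iff₀ (by positivity), mul_comm]
  exact (pow_mul_abs_sub_le hι hexp hc.le fun k hk => hxy k hk.le).trans_lt hgap

lemma exists_forall_dist_lt (hc : 1 < c) {ε : ℝ} (hε : 0 < ε) :
    ∃ N, ∀ x y : W, (∀ k ≤ N, ι x k = ι y k) → dist x y < ε := by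
  obtain ⟨N, hN⟩ := exists_pow_lt_of_lt_one hε (inv_lt_one_of_one_lt₀ hc)
  exact ⟨N, fun x y hxy => (abs_sub_lt_inv_pow hι hexp (by positivity) hxy).trans hN⟩

lemma injective (hc : 1 < c) : Function.Injective ι := fun x y hxy =>
  eq_of_forall_dist_le fun _ hε =>
    let ⟨_, hN⟩ := exists_forall_dist_lt hι hexp hc hε
    (hN x y fun k _ => congrFun hxy k).le

end Expanding

section Continuity

variable (hcont : ∀ i : ℕ, 1 ≤ i → ∀ z ∈ Ioo ((i : ℝ) - 1) i, ContinuousAt T z)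
include hcont

lemma continuousAt_iterate (x : W) (N : ℕ) : ContinuousAt (fun y : W => T^[N] y) x :=
  (continuousAt_iterate_of_forall_lt fun k _ => hcont _ (hι x k).1 _ (hι x k).2).comp
    continuous_subtype_val.continuousAt

lemma eventually_apply_eq (x : W) (k : ℕ) : ∀ᶠ y in 𝓝 x, ι y k = ι x k :=
  mem_of_superset
    ((continuousAt_iterate hι hcont x k).preimage_mem_nhds (isOpen_Ioo.mem_nhds (hι x k).2))
    fun y hy => Nat.eq_of_mem_Ioo_sub_one (hι y k).2 hy

lemma continuous : Continuous ι :=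
  continuous_pi fun k => continuous_iff_continuousAt.2 fun x => by
    rw [ContinuousAt, nhds_discrete ℕ, tendsto_pure]
    exact eventually_apply_eq hι hcont x k

lemma isEmbedding {c : ℝ}
    (hexp : ∀ i : ℕ, 1 ≤ i → ∀ a ∈ Ioo ((i : ℝ) - 1) i, ∀ b ∈ Ioo ((i : ℝ) - 1) i,
      c * |a - b| ≤ |T a - T b|) (hc : 1 < c) : IsEmbedding ι := by
  refine .mk' ι (injective hι hexp hc) fun x =>
    le_antisymm ?_ (continuous hι hcont).continuousAt.le_comap
  intro s hs
  obtain ⟨ε, hε, hball⟩ := Metric.mem_nhds_iff.1 hs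
  obtain ⟨N, hN⟩ := exists_forall_dist_lt hι hexp hc hε
  have hcyl : (Iic N).pi (fun k => {ι x k}) ∈ 𝓝 (ι x) :=
    (isOpen_set_pi (finite_Iic N) fun k _ => isOpen_discrete _).mem_nhds fun k _ => rfl
  exact mem_comap.2 ⟨_, hcyl, fun y hy => hball (hN y x hy)⟩

end Continuity

end Itinerary

theorem itinerary_embedding_and_conjugacy_general (T : ℝ → ℝ) (hT : IsT T)
    (W : Set ℝ)
    (ι : W → ℕ → ℕ)
    (hι : ∀ x : W, ∀ k : ℕ, 1 ≤ ι x k ∧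
      T^[k] (x : ℝ) ∈ Set.Ioo ((ι x k : ℝ) - 1) (ι x k)) :
    Topology.IsEmbedding ι ∧
      ∀ x y : W, (y : ℝ) = T (x : ℝ) → ∀ k : ℕ, ι y k = ι x (k + 1) :=
  ⟨Itinerary.isEmbedding hι (fun _ hi _ hz => hT.continuousAt hi hz)
      (fun _ hi _ ha _ hb => hT.five_mul_abs_sub_le hi ha hb) (by norm_num),
    fun _ _ hxy => Itinerary.apply_shift hι hxy⟩

/-- The itinerary map `ι` is a homeomorphism of
`W = {x ∈ [0,∞) : T^k x ∉ ℤ for all k}` onto its image in `(ℤ⁺)^ℕ` (with the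
product topology, the factors being discrete) and conjugates `T` with the left
shift. -/
theorem itinerary_embedding_and_conjugacy (T : ℝ → ℝ) (hT : IsT T)
    (W : Set ℝ)
    (hW : W = {x : ℝ | 0 ≤ x ∧ ∀ k : ℕ, ∀ m : ℤ, T^[k] x ≠ (m : ℝ)})
    (ι : W → ℕ → ℕ)
    (hι : ∀ x : W, ∀ k : ℕ, 1 ≤ ι x k ∧
      T^[k] (x : ℝ) ∈ Set.Ioo ((ι x k : ℝ) - 1) (ι x k)) :
    Topology.IsEmbedding ι ∧
      ∀ x y : W, (y : ℝ) = T (x : ℝ) → ∀ k : ℕ, ι y k = ι x (k + 1) :=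
  itinerary_embedding_and_conjugacy_general T hT W ι hι
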